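/- For every α ∈ S_n, the n+1 permutations [α, 0], [α, 1], ..., [α, n] in S_{n+1} are pairwise distinct, and as α ranges over all of S_n these yield each element of S_{n+1} exactly once; in particular, (n+1)·n! = (n+1)!. -/

import Mathlib

/-- Extension of `α ∈ S_m` to `S_{m+1}` fixing the new top element `Fin.last m`. -/
def liftPerm {m : ℕ} (α : Equiv.Perm (Fin m)) : Equiv.Perm (Fin (m + 1)) :=
  finSuccEquivLast.symm.permCongr α.optionCongr

/-- The "Case 0" construction `[α, 0]`: extend the chain of `Q̂_α` by a new arrow at the
top (here `0` plays the role of the paper's distinguished element `1`, and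
`Fin.last m` the role of the new element `n+1`): the resulting permutation sends
`0 ↦ last`, `last ↦ α 0`, and agrees with `α` elsewhere. -/
def chainExt {m : ℕ} (α : Equiv.Perm (Fin m)) : Equiv.Perm (Fin (m + 1)) :=
  liftPerm α * Equiv.swap 0 (Fin.last m)

/-- The cut-and-reconnect construction `[α, j]`: `insPerm α none = [α, 0]` (Case 0),
and for a target `j` of `Q̂_α`, `insPerm α (some j)` cuts the arrow `i → j` of `Q̂_α`
and reconnects via new arrows (virtual vertex) `→ j` and `i →` (new top vertex). -/
def insPerm {m : ℕ} (α : Equiv.Perm (Fin m)) : Option (Fin m) → Equiv.Perm (Fin (m + 1))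
  | none => chainExt α
  | some j => Equiv.swap (Fin.last m) j.castSucc * chainExt α

/-!
Evaluating at `0` recovers the cut position: `[α, j]` sends `0` to the new top vertex when
`j = 0` and to `j` otherwise, i.e. `insPerm α o 0 = finSuccEquivLast.symm o`. Once `o` is known,
cancelling the swap factors recovers `α`. So `(α, o) ↦ [α, o]` is injective, and it is a
bijection because both sides have `(m + 1)!` elements.
-/

section

variable {m : ℕ}

lemma liftPerm_injective : Function.Injective (liftPerm (m := m)) :=
  finSuccEquivLast.symm.permCongr.injective.comp Equiv.optionCongr_injective

lemma chainExt_injective : Function.Injective (chainExt (m := m)) :=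
  (mul_left_injective _).comp liftPerm_injective

lemma chainExt_apply_zero (α : Equiv.Perm (Fin m)) : chainExt α 0 = Fin.last m := by
  simp [chainExt, liftPerm]

lemma insPerm_apply_zero (α : Equiv.Perm (Fin m)) (o : Option (Fin m)) :
    insPerm α o 0 = finSuccEquivLast.symm o := by
  cases o <;> simp [insPerm, chainExt_apply_zero]

lemma insPerm_left_injective (o : Option (Fin m)) : Function.Injective (insPerm · o) := by
  cases o with
  | none => exact chainExt_injective
  | some j => exact (mul_right_injective _).comp chainExt_injective

lemma insPerm_uncurry_injective :
    Function.Injective (fun p : Equiv.Perm (Fin m) × Option (Fin m) => insPerm p.1 p.2) := by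
  rintro ⟨α, o⟩ ⟨β, o'⟩ h
  have ho : o = o' := by
    simpa [insPerm_apply_zero] using congrArg (· 0) h
  subst ho
  exact Prod.ext (insPerm_left_injective o h) rfl

end

/-- For every `α ∈ S_m` the `m+1` permutations `[α, j] ∈ S_{m+1}` are pairwise
distinct, and as `α` ranges over `S_m` every element of `S_{m+1}` arises exactly once;
in particular `(m+1)·m! = (m+1)!`. -/
theorem insPerm_bijective (m : ℕ) :
    Function.Bijective
      (fun p : Equiv.Perm (Fin m) × Option (Fin m) => insPerm p.1 p.2) ∧
    (m + 1) * m.factorial = (m + 1).factorial := by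
  have hcard : (m + 1) * m.factorial = (m + 1).factorial := (Nat.factorial_succ m).symm
  refine ⟨(Fintype.bijective_iff_injective_and_card _).2 ⟨insPerm_uncurry_injective, ?_⟩, hcard⟩
  simp [Fintype.card_perm, ← hcard, Nat.mul_comm]
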